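/- Every automorphism of the complete convex geometric graph K(P) on n ≥ 3 points in convex position (an abstract graph automorphism that maps crossing edge pairs to crossing pairs and non-crossing pairs to non-crossing pairs) is induced by a rotation or reflection of the cyclic order, so the group of such automorphisms is isomorphic to the dihedral group D_n. -/

import Mathlib

/-!
Chords of the convex `n`-gon `ℤ/n` cross exactly when the endpoints of one separate the endpoints
of the other in the cyclic order. A hull edge `{a, a + 1}` separates nothing, while any other
chord `{u, v}` crosses its rotation `{u + 1, v + 1}`. So a crossing-preserving permutation `σ`
maps hull edges to hull edges: `σ (a + 1) - σ a = ±1`. The sign cannot change from one step to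
the next, since that would give `σ (a + 2) = σ a` although `a + 2 ≠ a` for `n ≥ 3`; hence
`σ x = σ 0 ± x`. Conversely, rotations and reflections preserve separation, and they form a
faithful image of `D_n`.
-/

namespace PG

/-- The `k`-th vertex (mod `n`) of the convex polygon. -/
def pt (n : ℕ) (hn : 0 < n) (k : ℕ) : Fin n := ⟨k % n, Nat.mod_lt _ hn⟩

/-- `e` is a boundary (convex hull) edge of the convex `n`-gon. -/
def IsHullEdge {n : ℕ} (e : Sym2 (Fin n)) : Prop :=
  ∃ a b : Fin n, e = s(a, b) ∧ ((a.val + 1) % n = b.val ∨ (b.val + 1) % n = a.val)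

instance {n : ℕ} : DecidablePred (IsHullEdge (n := n)) := fun _ => by
  unfold IsHullEdge; infer_instance

/-- Two chords of the convex `n`-gon cross (intersect in interior points):
their endpoint pairs are all distinct and separate each other in the cyclic order. -/
def Crosses {n : ℕ} (e f : Sym2 (Fin n)) : Prop :=
  ∃ a b c d : Fin n, e = s(a, b) ∧ f = s(c, d) ∧
    a ≠ b ∧ c ≠ d ∧ a ≠ c ∧ a ≠ d ∧ b ≠ c ∧ b ≠ d ∧
    (((c.val + n - a.val) % n < (b.val + n - a.val) % n) ↔
      ¬((d.val + n - a.val) % n < (b.val + n - a.val) % n))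

instance {n : ℕ} (e f : Sym2 (Fin n)) : Decidable (Crosses e f) := by
  unfold Crosses; infer_instance

/-- The edge set of the spanning path visiting the points in the order given
by the permutation `p`. -/
def pathEdges {n : ℕ} (p : Equiv.Perm (Fin n)) : Finset (Sym2 (Fin n)) :=
  Finset.univ.filter (fun e => ∃ i j : Fin n, e = s(p i, p j) ∧ j.val = i.val + 1)

/-- `E` is the edge set of a non-crossing (plane) spanning path. -/
def IsNCPath {n : ℕ} (E : Finset (Sym2 (Fin n))) : Prop :=
  (∃ p : Equiv.Perm (Fin n), E = pathEdges p) ∧ ∀ e ∈ E, ∀ f ∈ E, ¬ Crosses e f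

instance {n : ℕ} : DecidablePred (IsNCPath (n := n)) := fun _ => by
  unfold IsNCPath pathEdges; infer_instance

/-- Vertices of the path graph `G(P)`: non-crossing spanning paths. -/
def PVert (n : ℕ) := {E : Finset (Sym2 (Fin n)) // IsNCPath E}

instance {n : ℕ} : Fintype (PVert n) := Subtype.fintype _
instance {n : ℕ} : DecidableEq (PVert n) := Subtype.instDecidableEq

/-- The path graph `G(P)`: two plane spanning paths are adjacent iff their
edge sets differ in exactly two edges. -/
def pathGraph (n : ℕ) : SimpleGraph (PVert n) where
  Adj u v := u ≠ v ∧ (u.1 \ v.1 ∪ v.1 \ u.1).card = 2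
  symm := ⟨by rintro u v ⟨h1, h2⟩; exact ⟨h1.symm, by rwa [Finset.union_comm]⟩⟩
  loopless := ⟨by rintro u ⟨h, _⟩; exact h rfl⟩

instance {n : ℕ} : DecidableRel (pathGraph n).Adj := fun u v => by
  unfold pathGraph; infer_instance

/-- `v` is a boundary path: all its edges are hull edges. -/
def IsBoundary {n : ℕ} (v : PVert n) : Prop := ∀ e ∈ v.1, IsHullEdge e

/-- Number of diagonals (the level) of a path. -/
def diagCount {n : ℕ} (v : PVert n) : ℕ :=
  (v.1.filter (fun e => ¬ IsHullEdge e)).card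

/-- Degree of a point in an edge set. -/
def degIn {n : ℕ} (E : Finset (Sym2 (Fin n))) (x : Fin n) : ℕ :=
  (E.filter (fun e => x ∈ e)).card

section

variable {n : ℕ} [NeZero n]

lemma val_one_of_one_lt (hn : 1 < n) : (1 : Fin n).val = 1 := by
  rw [Fin.val_one', Nat.mod_eq_of_lt hn]

lemma two_ne_zero_of_two_lt (hn : 2 < n) : (2 : Fin n) ≠ 0 := fun h => by
  simp [← Fin.val_eq_zero_iff, Nat.mod_eq_of_lt hn] at h

lemma one_ne_zero_of_one_lt (hn : 1 < n) : (1 : Fin n) ≠ 0 :=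
  Fin.val_ne_zero_iff.mp (by rw [val_one_of_one_lt hn]; exact one_ne_zero)

lemma self_ne_add_one (hn : 1 < n) (x : Fin n) : x ≠ x + 1 := fun h =>
  one_ne_zero_of_one_lt hn (add_eq_left.mp h.symm)

end

def PreservesCrossing {n : ℕ} (σ : Equiv.Perm (Fin n)) : Prop :=
  ∀ e f : Sym2 (Fin n), Crosses e f ↔ Crosses (e.map σ) (f.map σ)

section Arcs

variable {n : ℕ}

/-- `x` lies on the counterclockwise half-open arc `[a, b)`. -/
def OnArc (a b x : Fin n) : Prop := (x - a).val < (b - a).val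

def Separates (a b c d : Fin n) : Prop :=
  a ≠ b ∧ c ≠ d ∧ a ≠ c ∧ a ≠ d ∧ b ≠ c ∧ b ≠ d ∧ (OnArc a b c ↔ ¬ OnArc a b d)

lemma onArc_iff_val_lt (a b x : Fin n) :
    OnArc a b x ↔ (x.val + n - a.val) % n < (b.val + n - a.val) % n := by
  have := a.isLt
  rw [OnArc, Fin.val_sub, Fin.val_sub, Nat.add_comm (n - a.val), Nat.add_comm (n - a.val),
    ← Nat.add_sub_assoc this.le, ← Nat.add_sub_assoc this.le]

lemma onArc_swap [NeZero n] {a b x : Fin n} (hab : a ≠ b) (hxb : x ≠ b) :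
    OnArc b a x ↔ ¬ OnArc a b x := by
  have hz : b - a ≠ 0 := sub_ne_zero.mpr hab.symm
  have hyz : (x - a).val ≠ (b - a).val := fun h => hxb (sub_left_inj.mp (Fin.ext h))
  have := (x - a).isLt
  rw [OnArc, OnArc, ← sub_sub_sub_cancel_right x b a, ← neg_sub b a, Fin.val_neg, if_neg hz]
  rcases Nat.lt_or_gt_of_ne hyz with h | h
  · rw [Fin.coe_sub_iff_lt.mpr h]; omega
  · rw [Fin.sub_val_of_le h.le]; omega

lemma onArc_sub_left [NeZero n] (t : Fin n) {a b x : Fin n} (hab : a ≠ b) (hxa : x ≠ a)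
    (hxb : x ≠ b) :
    OnArc (t - a) (t - b) (t - x) ↔ ¬ OnArc a b x := by
  have hyz : (x - a).val ≠ (b - a).val := fun h => hxb (sub_left_inj.mp (Fin.ext h))
  have := (x - a).isLt
  have := (b - a).isLt
  rw [OnArc, OnArc, sub_sub_sub_cancel_left, sub_sub_sub_cancel_left, ← neg_sub x a,
    ← neg_sub b a, Fin.val_neg, Fin.val_neg, if_neg (sub_ne_zero.mpr hxa),
    if_neg (sub_ne_zero.mpr hab.symm)]
  omega

lemma eq_of_onArc_add_one [NeZero n] {a x : Fin n} (h : OnArc a (a + 1) x) : x = a := by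
  rw [OnArc, add_sub_cancel_left, Fin.val_one'] at h
  have : (x - a).val = 0 := by have := Nat.mod_le 1 n; omega
  exact sub_eq_zero.mp (Fin.val_eq_zero_iff.mp this)

lemma Separates.swap_left [NeZero n] {a b c d : Fin n} (h : Separates a b c d) :
    Separates b a c d := by
  obtain ⟨hab, hcd, hac, had, hbc, hbd, harc⟩ := h
  refine ⟨hab.symm, hcd, hbc, hbd, hac, had, ?_⟩
  rw [onArc_swap hab hbc.symm, onArc_swap hab hbd.symm]
  tauto

lemma Separates.swap_right {a b c d : Fin n} (h : Separates a b c d) : Separates a b d c := by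
  obtain ⟨hab, hcd, hac, had, hbc, hbd, harc⟩ := h
  exact ⟨hab, hcd.symm, had, hac, hbd, hbc, by tauto⟩

lemma crosses_mk_iff [NeZero n] (a b c d : Fin n) :
    Crosses s(a, b) s(c, d) ↔ Separates a b c d := by
  constructor
  · rintro ⟨a', b', c', d', he, hf, hab, hcd, hac, had, hbc, hbd, harc⟩
    rw [← onArc_iff_val_lt, ← onArc_iff_val_lt] at harc
    have h : Separates a' b' c' d' := ⟨hab, hcd, hac, had, hbc, hbd, harc⟩
    rw [Sym2.eq_iff] at he hf
    rcases he with ⟨rfl, rfl⟩ | ⟨rfl, rfl⟩ <;> rcases hf with ⟨rfl, rfl⟩ | ⟨rfl, rfl⟩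
    exacts [h, h.swap_right, h.swap_left, h.swap_left.swap_right]
  · rintro ⟨hab, hcd, hac, had, hbc, hbd, harc⟩
    rw [onArc_iff_val_lt, onArc_iff_val_lt] at harc
    exact ⟨a, b, c, d, rfl, rfl, hab, hcd, hac, had, hbc, hbd, harc⟩

lemma separates_sub_right_iff [NeZero n] (t a b c d : Fin n) :
    Separates (a - t) (b - t) (c - t) (d - t) ↔ Separates a b c d := by
  simp only [Separates, OnArc, ne_eq, sub_left_inj, sub_sub_sub_cancel_right]

lemma separates_sub_left_iff [NeZero n] (t a b c d : Fin n) :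
    Separates (t - a) (t - b) (t - c) (t - d) ↔ Separates a b c d := by
  simp only [Separates, ne_eq, sub_right_inj]
  refine and_congr_right fun hab => and_congr_right fun _ => and_congr_right fun hac =>
    and_congr_right fun had => and_congr_right fun hbc => and_congr_right fun hbd => ?_
  rw [onArc_sub_left t hab (Ne.symm hac) (Ne.symm hbc), onArc_sub_left t hab (Ne.symm had)
    (Ne.symm hbd)]
  tauto

lemma not_crosses_add_one [NeZero n] (a : Fin n) (f : Sym2 (Fin n)) :
    ¬ Crosses s(a, a + 1) f := by
  induction f using Sym2.ind with
  | _ c d =>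
    rw [crosses_mk_iff]
    rintro ⟨-, -, hac, had, -, -, harc⟩
    have hc : ¬ OnArc a (a + 1) c := fun h => hac (eq_of_onArc_add_one h).symm
    have hd : ¬ OnArc a (a + 1) d := fun h => had (eq_of_onArc_add_one h).symm
    tauto

lemma separates_add_one_add_one [NeZero n] (hn : 1 < n) {u v : Fin n} (h0 : v - u ≠ 0)
    (h1 : v - u ≠ 1) (h2 : v - u ≠ -1) : Separates u v (u + 1) (v + 1) := by
  have hone := val_one_of_one_lt hn
  have hv2 : 1 < (v - u).val := by
    have : (v - u).val ≠ 0 := Fin.val_ne_zero_iff.mpr h0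
    have : (v - u).val ≠ 1 := fun h => h1 (Fin.ext (h.trans hone.symm))
    omega
  refine ⟨fun h => h0 (by rw [h, sub_self]), fun h => h0 (by rw [add_right_cancel h, sub_self]),
    self_ne_add_one hn u, fun h => h2 (by rw [h]; abel), fun h => h1 (by rw [h]; abel),
    self_ne_add_one hn v, ?_⟩
  have hlt : (v - u).val + 1 < n := by
    have : (v - u).val ≠ n - 1 := fun h => h2 (by
      ext; rw [h, Fin.val_neg, if_neg (one_ne_zero_of_one_lt hn), hone])
    have := (v - u).isLt
    omega
  rw [OnArc, OnArc, add_sub_cancel_left, hone, show v + 1 - u = v - u + 1 by abel,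
    Fin.val_add_one_of_lt' hlt]
  omega

lemma preservesCrossing_of_separates_iff [NeZero n] {σ : Equiv.Perm (Fin n)}
    (h : ∀ a b c d, Separates (σ a) (σ b) (σ c) (σ d) ↔ Separates a b c d) :
    PreservesCrossing σ := by
  intro e f
  induction e using Sym2.ind with | _ a b => ?_
  induction f using Sym2.ind with | _ c d => ?_
  rw [Sym2.map_mk, Sym2.map_mk, crosses_mk_iff, crosses_mk_iff, h]

lemma PreservesCrossing.map_add_one_sub_eq_one_or_neg_one [NeZero n] (hn : 1 < n)
    {σ : Equiv.Perm (Fin n)} (hσ : PreservesCrossing σ) (a : Fin n) : σ (a + 1) - σ a = 1 ∨ σ (a + 1) - σ a = -1 := by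
  by_contra! h
  have h0 : σ (a + 1) - σ a ≠ 0 := sub_ne_zero.mpr (σ.injective.ne (self_ne_add_one hn a).symm)
  have hcross := (crosses_mk_iff _ _ _ _).mpr (separates_add_one_add_one hn h0 h.1 h.2)
  refine not_crosses_add_one a (s(σ.symm (σ a + 1), σ.symm (σ (a + 1) + 1))) ((hσ _ _).mpr ?_)
  simpa using hcross

end Arcs

section Rigidity

open Fin.CommRing

variable {n : ℕ} [NeZero n]

lemma eq_map_zero_add_mul_of_map_add_one_sub_eq {f : Fin n → Fin n} {c : Fin n}
    (h : ∀ a, f (a + 1) - f a = c) (x : Fin n) : f x = f 0 + x * c := by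
  have key (k : ℕ) : f (k : Fin n) = f 0 + k * c := by
    induction k with
    | zero => simp
    | succ k ih => push_cast; linear_combination h (k : Fin n) + ih
  simpa using key x.val

lemma map_add_one_sub_eq_of_injective {f : Fin n → Fin n} (hf : Function.Injective f)
    (h2 : (2 : Fin n) ≠ 0) (hstep : ∀ a, f (a + 1) - f a = 1 ∨ f (a + 1) - f a = -1) (a : Fin n) :
    f (a + 1) - f a = f 1 - f 0 := by
  have hsucc (b : Fin n) : f (b + 1 + 1) - f (b + 1) = f (b + 1) - f b := by
    rcases hstep (b + 1) with h | h <;> rcases hstep b with h' | h'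
    all_goals first
      | exact h.trans h'.symm
      | exact absurd (hf (by linear_combination h + h' : f (b + 1 + 1) = f b))
          fun hb => h2 (by linear_combination hb)
  have key (k : ℕ) : f ((k : Fin n) + 1) - f k = f 1 - f 0 := by
    induction k with
    | zero => simp
    | succ k ih => push_cast; rw [hsucc, ih]
  simpa using key a.val

theorem PreservesCrossing.eq_add_or_eq_sub (hn : 2 < n) {σ : Equiv.Perm (Fin n)}
    (hσ : PreservesCrossing σ) : (∀ x, σ x = σ 0 + x) ∨ (∀ x, σ x = σ 0 - x) := by
  have hstep := hσ.map_add_one_sub_eq_one_or_neg_one (by omega)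
  have hconst := map_add_one_sub_eq_of_injective σ.injective (two_ne_zero_of_two_lt hn) hstep
  rcases hstep 0 with h | h <;> rw [zero_add] at h
  · exact Or.inl fun x => by
      rw [eq_map_zero_add_mul_of_map_add_one_sub_eq (fun a => (hconst a).trans h) x, mul_one]
  · exact Or.inr fun x => by
      rw [eq_map_zero_add_mul_of_map_add_one_sub_eq (fun a => (hconst a).trans h) x, mul_neg_one,
        sub_eq_add_neg]

end Rigidity

section Dihedral

open Fin.CommRing

variable {n : ℕ} [NeZero n]

def dihedralToPerm : DihedralGroup n →* Equiv.Perm (Fin n) where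
  toFun
    | .r i => Equiv.subRight ((ZMod.finEquiv n).symm i)
    | .sr i => Equiv.subLeft ((ZMod.finEquiv n).symm i)
  map_one' := Equiv.ext fun x => by simp only [DihedralGroup.one_def]; simp
  map_mul' := by
    rintro (i | i) (j | j) <;> refine Equiv.ext fun x => ?_ <;>
      simp only [DihedralGroup.r_mul_r, DihedralGroup.r_mul_sr, DihedralGroup.sr_mul_r,
        DihedralGroup.sr_mul_sr, map_add, map_sub, Equiv.subRight_apply, Equiv.subLeft_apply,
        Equiv.Perm.coe_mul, Function.comp_apply] <;> abel

@[simp]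
lemma dihedralToPerm_r (i : ZMod n) (x : Fin n) :
    dihedralToPerm (.r i) x = x - (ZMod.finEquiv n).symm i := rfl

@[simp]
lemma dihedralToPerm_sr (i : ZMod n) (x : Fin n) :
    dihedralToPerm (.sr i) x = (ZMod.finEquiv n).symm i - x := rfl

lemma dihedralToPerm_injective (hn : 2 < n) : Function.Injective (dihedralToPerm (n := n)) := by
  rw [injective_iff_map_eq_one]
  rintro (i | i) h
  · have h0 := DFunLike.congr_fun h 0
    simp only [dihedralToPerm_r, Equiv.Perm.one_apply, zero_sub, neg_eq_zero,
      map_eq_zero_iff _ (ZMod.finEquiv n).symm.injective] at h0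
    rw [h0, DihedralGroup.r_zero]
  · have h0 := DFunLike.congr_fun h 0
    have h1 := DFunLike.congr_fun h 1
    simp only [dihedralToPerm_sr, Equiv.Perm.one_apply, sub_zero] at h0 h1
    exact absurd (by linear_combination h0 - h1) (two_ne_zero_of_two_lt hn)

lemma range_dihedralToPerm (hn : 2 < n) :
    Set.range (dihedralToPerm (n := n)) = {σ | PreservesCrossing σ} := by
  ext σ
  constructor
  · rintro ⟨i | i, rfl⟩
    · exact preservesCrossing_of_separates_iff (separates_sub_right_iff _)
    · exact preservesCrossing_of_separates_iff (separates_sub_left_iff _)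
  · intro hσ
    rcases hσ.eq_add_or_eq_sub hn with h | h
    · refine ⟨.r (ZMod.finEquiv n (-σ 0)), Equiv.ext fun x => ?_⟩
      rw [dihedralToPerm_r, RingEquiv.symm_apply_apply, h x, sub_neg_eq_add, add_comm]
    · refine ⟨.sr (ZMod.finEquiv n (σ 0)), Equiv.ext fun x => ?_⟩
      rw [dihedralToPerm_sr, RingEquiv.symm_apply_apply, h x]

end Dihedral

/-- Every geometric automorphism of the complete convex geometric graph `K(P)`
(a permutation of the points preserving the crossing relation of edges) is
induced by a rotation or a reflection of the cyclic order, and the group of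
geometric automorphisms is isomorphic to the dihedral group `D_n`. -/
theorem geom_aut_complete_graph (n : ℕ) (hn : 3 ≤ n) :
    (∀ σ : Equiv.Perm (Fin n),
      (∀ e f : Sym2 (Fin n), Crosses e f ↔ Crosses (e.map σ) (f.map σ)) →
      (∃ r : ℕ, ∀ x : Fin n, (σ x).val = (x.val + r) % n) ∨
      (∃ r : ℕ, ∀ x : Fin n, (σ x).val = (r + (n - x.val)) % n)) ∧
    (∃ Φ : DihedralGroup n →* Equiv.Perm (Fin n), Function.Injective Φ ∧
      Set.range Φ = {σ : Equiv.Perm (Fin n) |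
        ∀ e f : Sym2 (Fin n), Crosses e f ↔ Crosses (e.map σ) (f.map σ)}) := by
  have : NeZero n := ⟨by omega⟩
  refine ⟨fun σ hσ => ?_, dihedralToPerm, dihedralToPerm_injective hn, range_dihedralToPerm hn⟩
  rcases PreservesCrossing.eq_add_or_eq_sub hn hσ with h | h
  · exact Or.inl ⟨(σ 0).val, fun x => by rw [h x, Fin.val_add, Nat.add_comm]⟩
  · exact Or.inr ⟨(σ 0).val, fun x => by rw [h x, Fin.val_sub, Nat.add_comm]⟩

end PG
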